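/- Let M = (L, μ0, Σ, δ) be an MDP. There exists a strategy α such that M with strategy α is strongly synchronizing (i.e., liminf_{n→∞} ‖X_n^α‖ = 1) if and only if the perfect-information subset construction M^P for M has an accessible cycle C such that C has exactly one minimal recurrent cyclic set G (|Δ(C)| = 1), and every element g of G is a singleton (|g| = 1 for all g ∈ G). -/

import Mathlib

open Filter

namespace SyncMDP

/-- A history: an initial state followed by a list of (action, state) steps. -/
structure Hist (L A : Type) where
  start : L
  steps : List (A × L)
deriving DecidableEq

variable {L A : Type}

/-- The last state of a history. -/
def Hist.last (h : Hist L A) : L := h.steps.foldl (fun _ p => p.2) h.start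

/-- The length of a history. -/
def Hist.len (h : Hist L A) : ℕ := h.steps.length

/-- Extending a history by one action and one state. -/
def Hist.extend (h : Hist L A) (a : A) (l : L) : Hist L A := ⟨h.start, h.steps ++ [(a, l)]⟩

/-- A probability distribution on a finite type. -/
def IsDist {S : Type} [Fintype S] (d : S → ℝ) : Prop :=
  (∀ s, 0 ≤ d s) ∧ ∑ s, d s = 1

/-- A probabilistic transition function. -/
def IsTrans [Fintype L] (δ : L → A → L → ℝ) : Prop := ∀ l a, IsDist (δ l a)

/-- A (randomized) strategy assigns a distribution over actions to every history. -/
def IsStrategy [Fintype A] (α : Hist L A → A → ℝ) : Prop :=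
  ∀ h : Hist L A, (∀ a, 0 ≤ α h a) ∧ ∑ a, α h a = 1

/-- A pure strategy plays one action with probability one after every history. -/
def PureStrat (α : Hist L A → A → ℝ) : Prop := ∀ h, ∃ a, α h a = 1

/-- A blind strategy only depends on the length of the history. -/
def BlindStrat (α : Hist L A → A → ℝ) : Prop :=
  ∀ h₁ h₂ : Hist L A, h₁.len = h₂.len → α h₁ = α h₂

/-- A memoryless strategy only depends on the last state of the history. -/
def Memoryless (α : Hist L A → A → ℝ) : Prop :=
  ∀ h₁ h₂ : Hist L A, h₁.last = h₂.last → α h₁ = α h₂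

/-- Auxiliary product for the probability of a history: the first argument is the current
state, the second the history (prefix) read so far, the third the remaining steps. -/
def prAux (δ : L → A → L → ℝ) (α : Hist L A → A → ℝ) : L → Hist L A → List (A × L) → ℝ
  | _, _, [] => 1
  | cur, pre, (a, l) :: rest => α pre a * δ cur a l * prAux δ α l (pre.extend a l) rest

/-- The probability `Pr^α(h)` of a history `h`. -/
def pr (μ0 : L → ℝ) (δ : L → A → L → ℝ) (α : Hist L A → A → ℝ) (h : Hist L A) : ℝ :=
  μ0 h.start * prAux δ α h.start ⟨h.start, []⟩ h.steps

variable (L A) in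
/-- The finite set of all histories of length `n`. -/
def hists [Fintype L] [DecidableEq L] [Fintype A] [DecidableEq A] : ℕ → Finset (Hist L A)
  | 0 => Finset.univ.image fun l : L => ⟨l, []⟩
  | n + 1 => (hists n).biUnion fun h => Finset.univ.image fun p : A × L => h.extend p.1 p.2

variable [Fintype L] [DecidableEq L] [Fintype A] [DecidableEq A]

/-- The outcome `X_n^α` : the distribution over states at step `n` under strategy `α`. -/
noncomputable def outcome (μ0 : L → ℝ) (δ : L → A → L → ℝ) (α : Hist L A → A → ℝ)
    (n : ℕ) (l : L) : ℝ :=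
  ∑ h ∈ (hists L A n).filter (fun h => h.last = l), pr μ0 δ α h

/-- The norm `‖X‖ = max_{ℓ ∈ L} X(ℓ)` of a distribution on a (nonempty) finite type. -/
noncomputable def dnorm (X : L → ℝ) : ℝ := ⨆ l, X l

/-- Strongly synchronizing: `liminf_n ‖X_n^α‖ = 1`. -/
def StronglySync (μ0 : L → ℝ) (δ : L → A → L → ℝ) (α : Hist L A → A → ℝ) : Prop :=
  liminf (fun n => dnorm (outcome μ0 δ α n)) atTop = 1

/-- Weakly synchronizing: `limsup_n ‖X_n^α‖ = 1`. -/
def WeaklySync (μ0 : L → ℝ) (δ : L → A → L → ℝ) (α : Hist L A → A → ℝ) : Prop :=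
  limsup (fun n => dnorm (outcome μ0 δ α n)) atTop = 1

open Classical in
/-- `Post_σ(ℓ)`: the support of `δ(ℓ,σ)`. -/
noncomputable def post (δ : L → A → L → ℝ) (l : L) (a : A) : Finset L :=
  Finset.univ.filter fun l' => 0 < δ l a l'

/-- Transition function of the perfect-information subset construction. -/
noncomputable def deltaP (δ : L → A → L → ℝ) (s : Finset L) (f : L → A) : Finset L :=
  s.biUnion fun l => post δ l (f l)

/-- Transition function of the blind subset construction. -/
noncomputable def deltaB (δ : L → A → L → ℝ) (s : Finset L) (a : A) : Finset L :=
  s.biUnion fun l => post δ l a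

open Classical in
/-- The initial cell: the support of `μ0`. -/
noncomputable def initCell (μ0 : L → ℝ) : Finset L :=
  Finset.univ.filter fun l => 0 < μ0 l

/-- Reachability of a cell from the initial cell in the perfect-information
subset construction. -/
def ReachP (μ0 : L → ℝ) (δ : L → A → L → ℝ) (s : Finset L) : Prop :=
  Relation.ReflTransGen (fun t t' => ∃ f : L → A, deltaP δ t f = t') (initCell μ0) s

/-- Reachability of a cell from the initial cell in the blind subset construction. -/
def ReachB (μ0 : L → ℝ) (δ : L → A → L → ℝ) (s : Finset L) : Prop :=
  Relation.ReflTransGen (fun t t' => ∃ a : A, deltaB δ t a = t') (initCell μ0) s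

/-- Cyclic successor on `Fin d`. -/
def cyc {d : ℕ} (hd : 0 < d) (i : Fin d) : Fin d := ⟨((i : ℕ) + 1) % d, Nat.mod_lt _ hd⟩

/-- A recurrent cyclic set for the cycle `(s, act)` of length `d` of the
perfect-information subset construction. -/
def IsRCSP {d : ℕ} (hd : 0 < d) (δ : L → A → L → ℝ) (s : Fin d → Finset L)
    (act : Fin d → L → A) (g : Fin d → Finset L) : Prop :=
  ∀ i : Fin d, (g i).Nonempty ∧ g i ⊆ s i ∧
    (g i).biUnion (fun l => post δ l (act i l)) = g (cyc hd i)

/-- A minimal recurrent cyclic set (perfect-information). -/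
def IsMinRCSP {d : ℕ} (hd : 0 < d) (δ : L → A → L → ℝ) (s : Fin d → Finset L)
    (act : Fin d → L → A) (g : Fin d → Finset L) : Prop :=
  IsRCSP hd δ s act g ∧
    ∀ g' : Fin d → Finset L, IsRCSP hd δ s act g' → (∀ i, g' i ⊆ g i) → g' = g

/-- A recurrent cyclic set for the cycle `(s, act)` of length `d` of the blind
subset construction. -/
def IsRCSB {d : ℕ} (hd : 0 < d) (δ : L → A → L → ℝ) (s : Fin d → Finset L)
    (act : Fin d → A) (g : Fin d → Finset L) : Prop :=
  ∀ i : Fin d, (g i).Nonempty ∧ g i ⊆ s i ∧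
    (g i).biUnion (fun l => post δ l (act i)) = g (cyc hd i)

/-- A minimal recurrent cyclic set (blind). -/
def IsMinRCSB {d : ℕ} (hd : 0 < d) (δ : L → A → L → ℝ) (s : Fin d → Finset L)
    (act : Fin d → A) (g : Fin d → Finset L) : Prop :=
  IsRCSB hd δ s act g ∧
    ∀ g' : Fin d → Finset L, IsRCSB hd δ s act g' → (∀ i, g' i ⊆ g i) → g' = g

/-!
Strong synchronization forces the mass to concentrate on a single trail `ℓ n`. Since positive
transition probabilities are bounded below, an action carrying a fixed fraction of the mass at
`ℓ n` can only lead to `ℓ (n + 1)`, so eventually the trail is followed by Dirac actions. Every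
other state with positive mass reaches the trail along transitions the strategy uses; choosing at
each state an action that decreases the hitting time of the trail gives a pure selection whose
cells, by pigeonhole, repeat together with the trail state after a gap longer than all hitting
times. On the resulting cycle the trail is a recurrent cyclic set of singletons, and descent along
hitting times shows that every recurrent cyclic set meets it, hence contains it.

Conversely, play into the accessible cycle and then follow it. Uniqueness of the minimal recurrent
cyclic set makes the trail reachable from every state of every cell, so within a uniform number
`T` of steps a fixed fraction `β > 0` of the mass off the trail moves onto it, while the trail
keeps its mass: the mass off the trail decays geometrically.
-/

open Topology

section Histories

omit [Fintype L] [DecidableEq L] [Fintype A] [DecidableEq A]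

variable {μ0 : L → ℝ} {δ : L → A → L → ℝ} {α : Hist L A → A → ℝ}

@[simp] lemma Hist.last_extend (h : Hist L A) (a : A) (l : L) : (h.extend a l).last = l := by
  simp [Hist.extend, Hist.last]

lemma Hist.extend_inj {h h' : Hist L A} {a a' : A} {l l' : L}
    (he : h.extend a l = h'.extend a' l') : h = h' ∧ a = a' ∧ l = l' := by
  obtain ⟨st, steps⟩ := h
  obtain ⟨st', steps'⟩ := h'
  obtain ⟨rfl, he⟩ := Hist.mk.inj he
  obtain ⟨rfl, he⟩ := List.append_inj' he rfl
  simpa using he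

lemma prAux_nonneg [Fintype L] [Fintype A] (hδ : IsTrans δ) (hα : IsStrategy α) :
    ∀ (xs : List (A × L)) (cur : L) (pre : Hist L A), 0 ≤ prAux δ α cur pre xs
  | [], _, _ => zero_le_one
  | (a, l) :: rest, cur, pre =>
    mul_nonneg (mul_nonneg ((hα pre).1 a) ((hδ cur a).1 l)) (prAux_nonneg hδ hα rest l _)

lemma pr_nonneg [Fintype L] [Fintype A] (hμ0 : IsDist μ0) (hδ : IsTrans δ) (hα : IsStrategy α)
    (h : Hist L A) :
    0 ≤ pr μ0 δ α h :=
  mul_nonneg (hμ0.1 _) (prAux_nonneg hδ hα _ _ _)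

lemma prAux_append_singleton (a : A) (l : L) :
    ∀ (xs : List (A × L)) (cur : L) (pre : Hist L A),
      prAux δ α cur pre (xs ++ [(a, l)]) =
        prAux δ α cur pre xs * α ⟨pre.start, pre.steps ++ xs⟩ a *
          δ (xs.foldl (fun _ p => p.2) cur) a l
  | [], cur, pre => by simp [prAux]
  | (b, m) :: rest, cur, pre => by
    simp only [List.cons_append, prAux, List.foldl_cons, prAux_append_singleton a l rest m]
    simp only [Hist.extend, List.append_assoc, List.singleton_append]
    ring

lemma pr_extend (h : Hist L A) (a : A) (l : L) :
    pr μ0 δ α (h.extend a l) = pr μ0 δ α h * α h a * δ h.last a l := by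
  simp only [pr, Hist.extend, Hist.last, prAux_append_singleton, List.nil_append]
  ring

end Histories

section Outcome

variable {μ0 : L → ℝ} {δ : L → A → L → ℝ} {α : Hist L A → A → ℝ}

lemma Hist.len_eq_of_mem_hists {n : ℕ} {h : Hist L A} (hh : h ∈ hists L A n) : h.len = n := by
  induction n generalizing h with
  | zero =>
    obtain ⟨l, -, rfl⟩ := Finset.mem_image.mp hh
    rfl
  | succ n ih =>
    simp only [hists, Finset.mem_biUnion, Finset.mem_image] at hh
    obtain ⟨h', hh', p, -, rfl⟩ := hh
    simp [Hist.extend, Hist.len, ← ih hh']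

lemma sum_hists_succ (n : ℕ) (F : Hist L A → ℝ) :
    ∑ h ∈ hists L A (n + 1), F h = ∑ h ∈ hists L A n, ∑ p : A × L, F (h.extend p.1 p.2) := by
  rw [hists, Finset.sum_biUnion]
  · refine Finset.sum_congr rfl fun h _ => Finset.sum_image fun p _ p' _ he => ?_
    obtain ⟨-, ha, hl⟩ := Hist.extend_inj he
    exact Prod.ext ha hl
  · intro h _ h' _ hne
    simp only [Function.onFun, Finset.disjoint_left, Finset.mem_image]
    rintro _ ⟨p, -, rfl⟩ ⟨p', -, he⟩
    exact hne (Hist.extend_inj he).1.symm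

lemma outcome_zero (l : L) : outcome μ0 δ α 0 l = μ0 l := by
  rw [outcome, Finset.sum_filter, hists,
    Finset.sum_image fun _ _ _ _ hab => (Hist.mk.inj hab).1]
  simp [Hist.last, pr, prAux]

lemma outcome_succ (n : ℕ) (y : L) :
    outcome μ0 δ α (n + 1) y =
      ∑ h ∈ hists L A n, ∑ a, pr μ0 δ α h * α h a * δ h.last a y := by
  rw [outcome, Finset.sum_filter, sum_hists_succ]
  refine Finset.sum_congr rfl fun h _ => ?_
  rw [Fintype.sum_prod_type]
  simp [pr_extend]

lemma sum_pr_hists (hμ0 : IsDist μ0) (hδ : IsTrans δ) (hα : IsStrategy α) (n : ℕ) :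
    ∑ h ∈ hists L A n, pr μ0 δ α h = 1 := by
  induction n with
  | zero =>
    rw [hists, Finset.sum_image fun _ _ _ _ hab => (Hist.mk.inj hab).1]
    simpa [pr, prAux] using hμ0.2
  | succ n ih =>
    rw [sum_hists_succ, ← ih]
    refine Finset.sum_congr rfl fun h _ => ?_
    simp only [Fintype.sum_prod_type, pr_extend, ← Finset.mul_sum, (hδ _ _).2, (hα h).2,
      mul_one]

lemma sum_outcome (hμ0 : IsDist μ0) (hδ : IsTrans δ) (hα : IsStrategy α) (n : ℕ) :
    ∑ l, outcome μ0 δ α n l = 1 := by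
  unfold outcome
  rw [Finset.sum_fiberwise_of_maps_to fun h _ => Finset.mem_univ (Hist.last h)]
  exact sum_pr_hists hμ0 hδ hα n

lemma outcome_nonneg (hμ0 : IsDist μ0) (hδ : IsTrans δ) (hα : IsStrategy α) (n : ℕ) (l : L) :
    0 ≤ outcome μ0 δ α n l :=
  Finset.sum_nonneg fun h _ => pr_nonneg hμ0 hδ hα h

lemma sum_outcome_le_one_sub (hμ0 : IsDist μ0) (hδ : IsTrans δ) (hα : IsStrategy α) (n : ℕ)
    {S : Finset L} {z : L} (hz : z ∉ S) :
    ∑ y ∈ S, outcome μ0 δ α n y ≤ 1 - outcome μ0 δ α n z := by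
  have : ∑ y ∈ insert z S, outcome μ0 δ α n y ≤ 1 :=
    (sum_outcome hμ0 hδ hα n).symm ▸ Finset.sum_le_univ_sum_of_nonneg (outcome_nonneg hμ0 hδ hα n)
  rw [Finset.sum_insert hz] at this
  linarith

lemma outcome_le_one (hμ0 : IsDist μ0) (hδ : IsTrans δ) (hα : IsStrategy α) (n : ℕ) (l : L) :
    outcome μ0 δ α n l ≤ 1 :=
  (sum_outcome hμ0 hδ hα n).symm ▸
    Finset.single_le_sum (fun l _ => outcome_nonneg hμ0 hδ hα n l) (Finset.mem_univ l)

variable (μ0 δ α) in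
noncomputable def pairProb (n : ℕ) (x : L) (a : A) : ℝ :=
  ∑ h ∈ (hists L A n).filter (fun h => h.last = x), pr μ0 δ α h * α h a

lemma pairProb_nonneg (hμ0 : IsDist μ0) (hδ : IsTrans δ) (hα : IsStrategy α)
    (n : ℕ) (x : L) (a : A) : 0 ≤ pairProb μ0 δ α n x a :=
  Finset.sum_nonneg fun h _ => mul_nonneg (pr_nonneg hμ0 hδ hα h) ((hα h).1 a)

lemma sum_pairProb (hα : IsStrategy α) (n : ℕ) (x : L) :
    ∑ a, pairProb μ0 δ α n x a = outcome μ0 δ α n x := by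
  unfold pairProb outcome
  rw [Finset.sum_comm]
  exact Finset.sum_congr rfl fun h _ => by rw [← Finset.mul_sum, (hα h).2, mul_one]

lemma outcome_succ_eq_sum_pairProb (n : ℕ) (y : L) :
    outcome μ0 δ α (n + 1) y = ∑ x, ∑ a, pairProb μ0 δ α n x a * δ x a y := by
  rw [outcome_succ, ← Finset.sum_fiberwise_of_maps_to fun h _ => Finset.mem_univ h.last]
  refine Finset.sum_congr rfl fun x _ => ?_
  rw [Finset.sum_comm]
  refine Finset.sum_congr rfl fun a _ => ?_
  unfold pairProb
  rw [Finset.sum_mul]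
  refine Finset.sum_congr rfl fun h hh => ?_
  rw [(Finset.mem_filter.mp hh).2]

lemma pairProb_mul_le_outcome_succ (hμ0 : IsDist μ0) (hδ : IsTrans δ) (hα : IsStrategy α)
    (n : ℕ) (x y : L) (a : A) :
    pairProb μ0 δ α n x a * δ x a y ≤ outcome μ0 δ α (n + 1) y := by
  have hterm : ∀ x a, 0 ≤ pairProb μ0 δ α n x a * δ x a y := fun x a =>
    mul_nonneg (pairProb_nonneg hμ0 hδ hα n x a) ((hδ x a).1 y)
  rw [outcome_succ_eq_sum_pairProb]
  calc pairProb μ0 δ α n x a * δ x a y ≤ ∑ a, pairProb μ0 δ α n x a * δ x a y :=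
        Finset.single_le_sum (fun a _ => hterm x a) (Finset.mem_univ a)
    _ ≤ _ := Finset.single_le_sum (f := fun x => ∑ a, pairProb μ0 δ α n x a * δ x a y)
        (fun x _ => Finset.sum_nonneg fun a _ => hterm x a) (Finset.mem_univ x)

lemma outcome_succ_pos (hμ0 : IsDist μ0) (hδ : IsTrans δ) (hα : IsStrategy α) {n : ℕ}
    {x y : L} {a : A} (ha : 0 < pairProb μ0 δ α n x a) (hy : 0 < δ x a y) :
    0 < outcome μ0 δ α (n + 1) y :=
  (mul_pos ha hy).trans_le (pairProb_mul_le_outcome_succ hμ0 hδ hα n x y a)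

end Outcome

section Transitions

omit [DecidableEq L] [Fintype A] [DecidableEq A]

variable {δ : L → A → L → ℝ}

lemma mem_post {l l' : L} {a : A} : l' ∈ post δ l a ↔ 0 < δ l a l' := by
  simp [post]

lemma delta_eq_zero_of_notMem_post (hδ : IsTrans δ) {l l' : L} {a : A}
    (h : l' ∉ post δ l a) : δ l a l' = 0 :=
  le_antisymm (not_lt.mp (mt mem_post.mpr h)) ((hδ l a).1 l')

lemma post_nonempty (hδ : IsTrans δ) (l : L) (a : A) : (post δ l a).Nonempty := by
  by_contra hc
  have : ∑ l', δ l a l' = 0 := Finset.sum_eq_zero fun l' _ =>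
    delta_eq_zero_of_notMem_post hδ (by simp [Finset.not_nonempty_iff_eq_empty.mp hc])
  simp [(hδ l a).2] at this

lemma delta_eq_one_of_post_eq_singleton (hδ : IsTrans δ) {l y : L} {a : A}
    (h : post δ l a = {y}) : δ l a y = 1 := by
  rw [← (hδ l a).2, Finset.sum_eq_single y _ (by simp)]
  exact fun l' _ hl' => delta_eq_zero_of_notMem_post hδ (by simp [h, hl'])

lemma mem_deltaP [DecidableEq L] {s : Finset L} {f : L → A} {y : L} :
    y ∈ deltaP δ s f ↔ ∃ l ∈ s, y ∈ post δ l (f l) := by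
  simp [deltaP]

end Transitions

lemma Finite.exists_pos_le_of_pos {ι : Type*} [Finite ι] (f : ι → ℝ) :
    ∃ p : ℝ, 0 < p ∧ ∀ i, 0 < f i → p ≤ f i := by
  rcases isEmpty_or_nonempty ι with hι | hι
  · exact ⟨1, one_pos, fun i => isEmptyElim i⟩
  obtain ⟨i₀, hi₀⟩ := Finite.exists_min fun i => if 0 < f i then f i else 1
  refine ⟨_, ?_, fun i hi => (hi₀ i).trans_eq (if_pos hi)⟩
  split_ifs with h
  exacts [h, one_pos]

section Norm

omit [DecidableEq L] [Fintype A] [DecidableEq A]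

omit [Fintype L] in
lemma nonempty_of_isDist {S : Type} [Fintype S] {μ : S → ℝ} (hμ : IsDist μ) : Nonempty S := by
  by_contra h
  simpa [not_nonempty_iff.mp h] using hμ.2

lemma le_dnorm [Nonempty L] (X : L → ℝ) (l : L) : X l ≤ dnorm X :=
  le_ciSup (Set.finite_range X).bddAbove l

omit [Fintype L] in
lemma dnorm_le [Nonempty L] {X : L → ℝ} {c : ℝ} (h : ∀ l, X l ≤ c) : dnorm X ≤ c :=
  ciSup_le h

lemma exists_dnorm_eq [Nonempty L] (X : L → ℝ) : ∃ l, dnorm X = X l := by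
  obtain ⟨l, hl⟩ := Finite.exists_max X
  exact ⟨l, le_antisymm (dnorm_le hl) (le_dnorm X l)⟩

end Norm

section Cells

omit [Fintype A] [DecidableEq A]

variable {μ0 : L → ℝ} {δ : L → A → L → ℝ}

variable (μ0 δ) in
noncomputable def cellRun (F : ℕ → L → A) : ℕ → Finset L
  | 0 => initCell μ0
  | n + 1 => deltaP δ (cellRun F n) (F n)

lemma reachP_cellRun (F : ℕ → L → A) (n : ℕ) : ReachP μ0 δ (cellRun μ0 δ F n) := by
  induction n with
  | zero => exact .refl
  | succ n ih => exact ih.tail ⟨F n, rfl⟩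

lemma exists_cellRun_eq_of_reachP {s : Finset L} (hs : ReachP μ0 δ s) (G : ℕ → L → A) :
    ∃ m F, cellRun μ0 δ F m = s ∧ ∀ k, F (m + k) = G k := by
  induction hs generalizing G with
  | refl => exact ⟨0, G, rfl, fun k => by rw [zero_add]⟩
  | tail _ hstep ih =>
    obtain ⟨f, rfl⟩ := hstep
    obtain ⟨m, F, hF, hFG⟩ := ih fun k => if k = 0 then f else G (k - 1)
    refine ⟨m + 1, F, ?_, fun k => ?_⟩
    · rw [cellRun, hF, ← add_zero m, hFG, if_pos rfl]
    · rw [add_assoc, add_comm 1, hFG, if_neg k.succ_ne_zero, Nat.add_sub_cancel]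

end Cells

section TransProb

omit [Fintype A] [DecidableEq A]

variable {δ : L → A → L → ℝ}

variable (δ) in
noncomputable def transProb : (ℕ → L → A) → ℕ → L → L → ℝ
  | _, 0, x, y => if x = y then 1 else 0
  | F, t + 1, x, y => ∑ z, δ x (F 0 x) z * transProb (fun j => F (j + 1)) t z y

lemma transProb_nonneg (hδ : IsTrans δ) (F : ℕ → L → A) (t : ℕ) (x y : L) :
    0 ≤ transProb δ F t x y := by
  induction t generalizing F x with
  | zero => unfold transProb; split_ifs <;> norm_num
  | succ t ih => exact Finset.sum_nonneg fun z _ => mul_nonneg ((hδ x _).1 z) (ih _ z)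

lemma transProb_one (F : ℕ → L → A) (x y : L) : transProb δ F 1 x y = δ x (F 0 x) y := by
  simp [transProb]

lemma transProb_mul_le_add (hδ : IsTrans δ) (F : ℕ → L → A) (t₁ t₂ : ℕ) (x z y : L) :
    transProb δ F t₁ x z * transProb δ (fun j => F (t₁ + j)) t₂ z y
      ≤ transProb δ F (t₁ + t₂) x y := by
  induction t₁ generalizing F x with
  | zero =>
    simp only [transProb, zero_add]
    split_ifs with h
    · rw [h, one_mul]
    · rw [zero_mul]; exact transProb_nonneg hδ F t₂ x y
  | succ t₁ ih =>
    rw [add_right_comm]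
    simp only [transProb, Finset.sum_mul]
    refine Finset.sum_le_sum fun w _ => ?_
    rw [mul_assoc]
    refine mul_le_mul_of_nonneg_left ?_ ((hδ x _).1 w)
    have hF : (fun j => F (t₁ + 1 + j)) = fun j => F (t₁ + j + 1) :=
      funext fun j => by rw [add_right_comm]
    exact hF ▸ ih (fun j => F (j + 1)) w

end TransProb

section Markov

variable {μ0 : L → ℝ} {δ : L → A → L → ℝ}

def markovStrat (F : ℕ → L → A) : Hist L A → A → ℝ :=
  fun h a => if F h.len h.last = a then 1 else 0

omit [Fintype L] [DecidableEq L] in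
lemma isStrategy_markovStrat (F : ℕ → L → A) : IsStrategy (markovStrat F : Hist L A → A → ℝ) :=
  fun h => ⟨fun a => by unfold markovStrat; split_ifs <;> norm_num, by simp [markovStrat]⟩

lemma outcome_markovStrat_succ (F : ℕ → L → A) (n : ℕ) (y : L) :
    outcome μ0 δ (markovStrat F) (n + 1) y
      = ∑ x, outcome μ0 δ (markovStrat F) n x * δ x (F n x) y := by
  have hpair : ∀ x a, pairProb μ0 δ (markovStrat F) n x a
      = if F n x = a then outcome μ0 δ (markovStrat F) n x else 0 := by
    intro x a
    have hm : ∀ h ∈ (hists L A n).filter (·.last = x),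
        markovStrat F h a = if F n x = a then 1 else 0 := fun h hh => by
      obtain ⟨hn, rfl⟩ := Finset.mem_filter.mp hh
      rw [markovStrat, Hist.len_eq_of_mem_hists hn]
    unfold pairProb outcome
    rw [Finset.sum_congr rfl fun h hh => by rw [hm h hh]]
    split_ifs <;> simp
  simp [outcome_succ_eq_sum_pairProb, hpair, ite_mul]

lemma outcome_markovStrat_eq_zero (hμ0 : IsDist μ0) (hδ : IsTrans δ) (F : ℕ → L → A) {n : ℕ}
    {x : L} (hx : x ∉ cellRun μ0 δ F n) : outcome μ0 δ (markovStrat F) n x = 0 := by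
  induction n generalizing x with
  | zero =>
    rw [outcome_zero]
    exact le_antisymm (not_lt.mp fun h => hx (by simp [cellRun, initCell, h])) (hμ0.1 x)
  | succ n ih =>
    rw [outcome_markovStrat_succ]
    refine Finset.sum_eq_zero fun z _ => ?_
    by_cases hz : z ∈ cellRun μ0 δ F n
    · rw [delta_eq_zero_of_notMem_post hδ fun h => hx (mem_deltaP.mpr ⟨z, hz, h⟩), mul_zero]
    · rw [ih hz, zero_mul]

lemma sum_outcome_markovStrat_cellRun (hμ0 : IsDist μ0) (hδ : IsTrans δ) (F : ℕ → L → A)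
    (n : ℕ) : ∑ x ∈ cellRun μ0 δ F n, outcome μ0 δ (markovStrat F) n x = 1 := by
  rw [← sum_outcome hμ0 hδ (isStrategy_markovStrat F) n]
  exact Finset.sum_subset (Finset.subset_univ _) fun x _ hx =>
    outcome_markovStrat_eq_zero hμ0 hδ F hx

lemma outcome_add_eq_sum_transProb (F : ℕ → L → A) (n t : ℕ) (y : L) :
    outcome μ0 δ (markovStrat F) (n + t) y
      = ∑ x, outcome μ0 δ (markovStrat F) n x * transProb δ (fun j => F (n + j)) t x y := by
  induction t generalizing n with
  | zero => simp [transProb]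
  | succ t ih =>
    rw [← add_assoc, add_right_comm, ih]
    simp only [outcome_markovStrat_succ, transProb, Finset.sum_mul, Finset.mul_sum, mul_assoc]
    rw [Finset.sum_comm]
    simp only [add_zero, add_assoc, add_comm 1]

end Markov

section Cycle

omit [Fintype L] [DecidableEq L] [Fintype A] [DecidableEq A]

variable {d : ℕ} (hd : 0 < d)

def phase (k : ℕ) : Fin d := ⟨k % d, Nat.mod_lt _ hd⟩

lemma phase_val (i : Fin d) : phase hd i = i :=
  Fin.ext (Nat.mod_eq_of_lt i.isLt)

lemma val_phase_of_lt {k : ℕ} (hk : k < d) : (phase hd k : ℕ) = k :=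
  Nat.mod_eq_of_lt hk

lemma apply_phase_of_periodic {β : Type*} {v : ℕ → β} {m : ℕ} (hv : v (m + d) = v m) {k : ℕ}
    (hk : k ≤ d) : v (m + phase hd k) = v (m + k) := by
  rcases hk.lt_or_eq with hk | rfl
  · rw [val_phase_of_lt hd hk]
  · simp [phase, hv]

lemma phase_succ (k : ℕ) : phase hd (k + 1) = cyc hd (phase hd k) :=
  Fin.ext (by simp [phase, cyc])

lemma phase_val_add (k j : ℕ) : phase hd (phase hd k + j) = phase hd (k + j) :=
  Fin.ext (by simp [phase, Nat.mod_add_mod])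

lemma phase_add_self (k : ℕ) : phase hd (k + d) = phase hd k :=
  Fin.ext (by simp [phase])

lemma cyc_eq_phase (i : Fin d) : cyc hd i = phase hd (i + 1) := by
  rw [phase_succ, phase_val]

lemma cyc_phase_pred (i : Fin d) : cyc hd (phase hd (i + (d - 1))) = i := by
  rw [← phase_succ, add_assoc, Nat.sub_add_cancel hd, phase_add_self, phase_val]

lemma phase_pred_cyc (i : Fin d) : phase hd (cyc hd i + (d - 1)) = i := by
  rw [cyc_eq_phase, phase_val_add, add_assoc, Nat.add_sub_cancel' hd, phase_add_self, phase_val]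

variable {hd} in
lemma cyc_induction {P : Fin d → Prop} {i : Fin d} (hi : P i) (hP : ∀ j, P j → P (cyc hd j))
    (j : Fin d) : P j := by
  have hk : ∀ k, P (phase hd (i + k)) := fun k => by
    induction k with
    | zero => rwa [add_zero, phase_val]
    | succ k ih => rw [← add_assoc, phase_succ]; exact hP _ ih
  have := hk (d - i + j)
  rwa [← add_assoc, Nat.add_sub_cancel' i.isLt.le, add_comm, phase_add_self, phase_val] at this

end Cycle

section RecurrentCyclicSets

omit [Fintype A] [DecidableEq A]

variable {d : ℕ} {hd : 0 < d} {δ : L → A → L → ℝ} {s : Fin d → Finset L}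
  {act : Fin d → L → A}

variable (hd δ act) in
def IsClosedP (C : Fin d → Finset L) : Prop :=
  ∀ i, (C i).biUnion (fun l => post δ l (act i l)) ⊆ C (cyc hd i)

lemma IsRCSP.isClosedP {g : Fin d → Finset L} (hg : IsRCSP hd δ s act g) :
    IsClosedP hd δ act g :=
  fun i => ((hg i).2.2).le

lemma IsClosedP.nonempty (hδ : IsTrans δ) {C : Fin d → Finset L} (hC : IsClosedP hd δ act C)
    {i : Fin d} (hi : (C i).Nonempty) (j : Fin d) : (C j).Nonempty := by
  refine cyc_induction (hd := hd) (P := fun j => (C j).Nonempty) hi (fun j ⟨x, hx⟩ => ?_) j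
  obtain ⟨y, hy⟩ := post_nonempty hδ x (act j x)
  exact ⟨y, hC j (Finset.mem_biUnion.mpr ⟨x, hx, hy⟩)⟩

lemma IsRCSP.subset_of_subset {g C : Fin d → Finset L} (hg : IsRCSP hd δ s act g)
    (hC : IsClosedP hd δ act C) {i : Fin d} (hi : g i ⊆ C i) (j : Fin d) : g j ⊆ C j := by
  refine cyc_induction (hd := hd) (P := fun j => g j ⊆ C j) hi (fun j hj => ?_) j
  rw [← (hg j).2.2]
  exact (Finset.biUnion_subset_biUnion_of_subset_left _ hj).trans (hC j)

lemma isMinRCSP_of_card_eq_one {g : Fin d → Finset L} (hg : IsRCSP hd δ s act g)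
    (hcard : ∀ i, (g i).card = 1) : IsMinRCSP hd δ s act g := by
  refine ⟨hg, fun g' hg' hsub => funext fun i => ?_⟩
  obtain ⟨x, hx⟩ := Finset.card_eq_one.mp (hcard i)
  have hi := hsub i
  rw [hx] at hi ⊢
  exact (Finset.Nonempty.subset_singleton_iff (hg' i).1).mp hi

lemma exists_isMinRCSP_le (hδ : IsTrans δ) {C : Fin d → Finset L} (hC : IsClosedP hd δ act C)
    (hCs : C ≤ s) {i : Fin d} (hi : (C i).Nonempty) :
    ∃ g, IsMinRCSP hd δ s act g ∧ g ≤ C := by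
  obtain ⟨F, ⟨hFc, ⟨j, hj⟩, hFC⟩, hmin⟩ := wellFounded_lt.has_min
    {F | IsClosedP hd δ act F ∧ (∃ i, (F i).Nonempty) ∧ F ≤ C} ⟨C, hC, ⟨i, hi⟩, le_rfl⟩
  have hFne := hFc.nonempty hδ hj
  -- The one-step image `G` of `F` along the cycle is again closed, nonempty and below `F`.
  have hRCS : IsRCSP hd δ s act F := by
    set G : Fin d → Finset L := fun j =>
      (F (phase hd (j + (d - 1)))).biUnion fun l => post δ l (act (phase hd (j + (d - 1))) l)
    have hGF : G ≤ F := fun j => by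
      simpa only [cyc_phase_pred] using hFc (phase hd (j + (d - 1)))
    have hGcyc : ∀ j, G (cyc hd j) = (F j).biUnion fun l => post δ l (act j l) := fun j => by
      simp only [G, phase_pred_cyc]
    have hGc : IsClosedP hd δ act G := fun j => by
      rw [hGcyc]
      exact Finset.biUnion_subset_biUnion_of_subset_left _ (hGF j)
    have hGne : (G (cyc hd i)).Nonempty := by
      obtain ⟨x, hx⟩ := hFne i
      obtain ⟨y, hy⟩ := post_nonempty hδ x (act i x)
      exact ⟨y, hGcyc i ▸ Finset.mem_biUnion.mpr ⟨x, hx, hy⟩⟩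
    have hGF' : G = F := eq_of_le_of_not_lt hGF (hmin G ⟨hGc, ⟨_, hGne⟩, hGF.trans hFC⟩)
    exact fun j => ⟨hFne j, (hFC j).trans (hCs j), by rw [← hGcyc, hGF']⟩
  refine ⟨F, ⟨hRCS, fun g hg hgF => ?_⟩, hFC⟩
  have hle : g ≤ F := hgF
  exact eq_of_le_of_not_lt hle (hmin g ⟨hg.isClosedP, ⟨i, (hg i).1⟩, hle.trans hFC⟩)

end RecurrentCyclicSets

lemma tendsto_one_of_monotone_of_sub_le {u : ℕ → ℝ} (hmono : Monotone u) (hle : ∀ k, u k ≤ 1)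
    {β : ℝ} (hβ : 0 < β) (T : ℕ) (hstep : ∀ k, 1 - u (k + T) ≤ (1 - β) * (1 - u k)) :
    Tendsto u atTop (𝓝 1) := by
  have hlim := tendsto_atTop_ciSup hmono ⟨1, by rintro _ ⟨k, rfl⟩; exact hle k⟩
  have hsup : ⨆ k, u k ≤ 1 := ciSup_le hle
  have hsup' : 1 - ⨆ k, u k ≤ (1 - β) * (1 - ⨆ k, u k) :=
    le_of_tendsto_of_tendsto' ((hlim.comp (tendsto_add_atTop_nat T)).const_sub 1)
      ((hlim.const_sub 1).const_mul (1 - β)) hstep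
  rwa [show ⨆ k, u k = 1 by nlinarith] at hlim

omit [Fintype L] [Fintype A] [DecidableEq A] in
lemma add_mul_le_sum_mul {S : Finset L} {w K : L → ℝ} (hw : ∀ x, 0 ≤ w x)
    (hS : ∑ x ∈ S, w x = 1) {z : L} (hz : z ∈ S) {β : ℝ} (hK : ∀ x ∈ S, β ≤ K x)
    (hKz : 1 ≤ K z) : β + (1 - β) * w z ≤ ∑ x ∈ S, w x * K x := by
  have hterm : ∀ x ∈ S, β * w x + (1 - β) * (if x = z then w x else 0) ≤ w x * K x := by
    intro x hx
    split_ifs with h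
    · subst h; nlinarith [hw x]
    · nlinarith [hw x, hK x hx]
  calc β + (1 - β) * w z
      = ∑ x ∈ S, (β * w x + (1 - β) * (if x = z then w x else 0)) := by
        rw [Finset.sum_add_distrib, ← Finset.mul_sum, ← Finset.mul_sum, hS,
          Finset.sum_ite_eq' S z, if_pos hz, mul_one]
    _ ≤ _ := Finset.sum_le_sum hterm

section CycleTransProb

omit [Fintype A] [DecidableEq A]

variable {d : ℕ} {hd : 0 < d} {δ : L → A → L → ℝ} {s : Fin d → Finset L} {act : Fin d → L → A}
  {ℓ : Fin d → L}

variable (hd δ act) in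
noncomputable def cycleTransProb (k : ℕ) : ℕ → L → L → ℝ :=
  transProb δ fun j => act (phase hd (k + j))

lemma cycleTransProb_phase (k : ℕ) :
    cycleTransProb hd δ act (phase hd k) = cycleTransProb hd δ act k := by
  simp only [cycleTransProb, phase_val_add]

lemma cycleTransProb_succ_le (hδ : IsTrans δ) (k r : ℕ) (x y z : L) :
    cycleTransProb hd δ act k r x y * δ y (act (phase hd (k + r)) y) z
      ≤ cycleTransProb hd δ act k (r + 1) x z := by
  have := transProb_mul_le_add hδ (fun j => act (phase hd (k + j))) r 1 x y z
  rwa [transProb_one, add_zero] at this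

lemma cycleTransProb_add_le (hδ : IsTrans δ) (k r t : ℕ) (x y z : L) :
    cycleTransProb hd δ act k r x y * cycleTransProb hd δ act (k + r) t y z
      ≤ cycleTransProb hd δ act k (r + t) x z := by
  have := transProb_mul_le_add hδ (fun j => act (phase hd (k + j))) r t x y z
  simpa only [cycleTransProb, ← add_assoc] using this

lemma one_le_cycleTransProb_trail (hδ : IsTrans δ)
    (hℓ : ∀ i, post δ (ℓ i) (act i (ℓ i)) = {ℓ (cyc hd i)}) (k t : ℕ) :
    1 ≤ cycleTransProb hd δ act k t (ℓ (phase hd k)) (ℓ (phase hd (k + t))) := by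
  induction t with
  | zero => simp [cycleTransProb, transProb]
  | succ t ih =>
    refine le_trans ?_ (cycleTransProb_succ_le hδ k t _ (ℓ (phase hd (k + t))) _)
    rw [← add_assoc, phase_succ, delta_eq_one_of_post_eq_singleton hδ (hℓ _), mul_one]
    exact ih

lemma exists_cycleTransProb_trail_pos (hδ : IsTrans δ)
    (hcyc : ∀ i, deltaP δ (s i) (act i) = s (cyc hd i))
    (hmin : ∀ g, IsMinRCSP hd δ s act g → ∀ i, ℓ i ∈ g i) {k : ℕ} {x : L}
    (hx : x ∈ s (phase hd k)) : ∃ r, 0 < cycleTransProb hd δ act k r x (ℓ (phase hd (k + r))) := by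
  classical
  set C : Fin d → Finset L := fun j =>
    (s j).filter fun y => ∃ r, phase hd (k + r) = j ∧ 0 < cycleTransProb hd δ act k r x y
  have hC : IsClosedP hd δ act C := by
    intro j z hz
    obtain ⟨y, hy, hyz⟩ := Finset.mem_biUnion.mp hz
    obtain ⟨hys, r, rfl, hr⟩ := Finset.mem_filter.mp hy
    refine Finset.mem_filter.mpr ⟨hcyc _ ▸ mem_deltaP.mpr ⟨y, hys, hyz⟩, r + 1,
      by rw [← add_assoc, phase_succ], ?_⟩
    exact (mul_pos hr (mem_post.mp hyz)).trans_le (cycleTransProb_succ_le hδ k r x y z)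
  have hxC : (C (phase hd k)).Nonempty :=
    ⟨x, Finset.mem_filter.mpr ⟨hx, 0, by rw [add_zero], by simp [cycleTransProb, transProb]⟩⟩
  obtain ⟨g, hg, hgC⟩ := exists_isMinRCSP_le hδ hC (fun j => Finset.filter_subset _ _) hxC
  obtain ⟨-, r, hr, hpos⟩ := Finset.mem_filter.mp (hgC _ (hmin g hg (phase hd k)))
  exact ⟨r, hr ▸ hpos⟩

lemma cycleTransProb_trail_pos_of_le (hδ : IsTrans δ)
    (hℓ : ∀ i, post δ (ℓ i) (act i (ℓ i)) = {ℓ (cyc hd i)}) {k r T : ℕ} {x : L}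
    (hr : 0 < cycleTransProb hd δ act k r x (ℓ (phase hd (k + r)))) (hrT : r ≤ T) :
    0 < cycleTransProb hd δ act k T x (ℓ (phase hd (k + T))) := by
  obtain ⟨t, rfl⟩ := Nat.exists_eq_add_of_le hrT
  have hstay := one_le_cycleTransProb_trail hδ hℓ (k + r) t
  rw [add_assoc] at hstay
  exact (hr.trans_le (le_mul_of_one_le_right hr.le hstay)).trans_le
    (cycleTransProb_add_le hδ k r t x _ _)

lemma exists_uniform_trail_bound (hδ : IsTrans δ)
    (hcyc : ∀ i, deltaP δ (s i) (act i) = s (cyc hd i))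
    (hℓ : ∀ i, post δ (ℓ i) (act i (ℓ i)) = {ℓ (cyc hd i)})
    (hmin : ∀ g, IsMinRCSP hd δ s act g → ∀ i, ℓ i ∈ g i) :
    ∃ T β, 0 < β ∧ ∀ k x, x ∈ s (phase hd k) →
      β ≤ cycleTransProb hd δ act k T x (ℓ (phase hd (k + T))) := by
  have hr : ∀ (i : Fin d) (x : L), ∃ r, x ∈ s i →
      0 < cycleTransProb hd δ act i r x (ℓ (phase hd (i + r))) := fun i x => by
    by_cases hx : x ∈ s i
    · obtain ⟨r, hr⟩ := exists_cycleTransProb_trail_pos hδ hcyc hmin (k := i) (by rwa [phase_val])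
      exact ⟨r, fun _ => hr⟩
    · exact ⟨0, fun h => absurd h hx⟩
  choose r hr using hr
  set T := Finset.univ.sup fun p : Fin d × L => r p.1 p.2
  obtain ⟨β, hβ, hβle⟩ := Finite.exists_pos_le_of_pos
    fun p : Fin d × L => cycleTransProb hd δ act p.1 T p.2 (ℓ (phase hd (p.1 + T)))
  refine ⟨T, β, hβ, fun k x hx => ?_⟩
  have hT := cycleTransProb_trail_pos_of_le hδ hℓ (hr _ x hx)
    (Finset.le_sup (f := fun p : Fin d × L => r p.1 p.2) (Finset.mem_univ (phase hd k, x)))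
  simpa only [cycleTransProb_phase, phase_val_add] using hβle (phase hd k, x) hT

end CycleTransProb

section Sufficiency

variable {d : ℕ} {hd : 0 < d} {μ0 : L → ℝ} {δ : L → A → L → ℝ} {s : Fin d → Finset L}
  {act : Fin d → L → A} {ℓ : Fin d → L}

omit [Fintype A] [DecidableEq A] in
lemma cellRun_add_eq_of_cycle (hcyc : ∀ i, deltaP δ (s i) (act i) = s (cyc hd i))
    {F : ℕ → L → A} {m : ℕ} (hFm : cellRun μ0 δ F m = s ⟨0, hd⟩)
    (hF : ∀ k, F (m + k) = act (phase hd k)) (k : ℕ) :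
    cellRun μ0 δ F (m + k) = s (phase hd k) := by
  induction k with
  | zero => exact hFm.trans (congrArg s (Fin.ext (Nat.zero_mod d).symm))
  | succ k ih => rw [← add_assoc, cellRun, ih, hF, hcyc, phase_succ]

lemma add_mul_le_outcome_trail (hμ0 : IsDist μ0) (hδ : IsTrans δ)
    (hcyc : ∀ i, deltaP δ (s i) (act i) = s (cyc hd i))
    (hℓ : ∀ i, post δ (ℓ i) (act i (ℓ i)) = {ℓ (cyc hd i)}) (hℓs : ∀ i, ℓ i ∈ s i)
    {F : ℕ → L → A} {m : ℕ} (hFm : cellRun μ0 δ F m = s ⟨0, hd⟩)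
    (hF : ∀ k, F (m + k) = act (phase hd k)) {k t : ℕ} {β : ℝ}
    (hK : ∀ x ∈ s (phase hd k), β ≤ cycleTransProb hd δ act k t x (ℓ (phase hd (k + t)))) :
    β + (1 - β) * outcome μ0 δ (markovStrat F) (m + k) (ℓ (phase hd k))
      ≤ outcome μ0 δ (markovStrat F) (m + (k + t)) (ℓ (phase hd (k + t))) := by
  have hα := isStrategy_markovStrat F
  have hsum := outcome_add_eq_sum_transProb (μ0 := μ0) (δ := δ) F (m + k) t (ℓ (phase hd (k + t)))
  simp only [add_assoc, hF] at hsum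
  calc _ ≤ ∑ x ∈ s (phase hd k), outcome μ0 δ (markovStrat F) (m + k) x *
          cycleTransProb hd δ act k t x (ℓ (phase hd (k + t))) :=
        add_mul_le_sum_mul (outcome_nonneg hμ0 hδ hα _)
          (cellRun_add_eq_of_cycle hcyc hFm hF k ▸ sum_outcome_markovStrat_cellRun hμ0 hδ F _)
          (hℓs _) hK (one_le_cycleTransProb_trail hδ hℓ k t)
    _ ≤ _ := Finset.sum_le_univ_sum_of_nonneg fun x =>
        mul_nonneg (outcome_nonneg hμ0 hδ hα _ x) (transProb_nonneg hδ _ t x _)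
    _ = _ := hsum.symm

theorem exists_stronglySync_of_trail (hμ0 : IsDist μ0) (hδ : IsTrans δ)
    (hcyc : ∀ i, deltaP δ (s i) (act i) = s (cyc hd i)) (hreach : ReachP μ0 δ (s ⟨0, hd⟩))
    (hℓ : ∀ i, post δ (ℓ i) (act i (ℓ i)) = {ℓ (cyc hd i)}) (hℓs : ∀ i, ℓ i ∈ s i)
    (hmin : ∀ g, IsMinRCSP hd δ s act g → ∀ i, ℓ i ∈ g i) :
    ∃ α, IsStrategy α ∧ StronglySync μ0 δ α := by
  have := nonempty_of_isDist hμ0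
  obtain ⟨T, β, hβ, hβle⟩ := exists_uniform_trail_bound hδ hcyc hℓ hmin
  obtain ⟨m, F, hFm, hF⟩ := exists_cellRun_eq_of_reachP hreach fun k => act (phase hd k)
  have hα := isStrategy_markovStrat F
  set u : ℕ → ℝ := fun k => outcome μ0 δ (markovStrat F) (m + k) (ℓ (phase hd k))
  have hmono : Monotone u := monotone_nat_of_le_succ fun k => by
    simpa using add_mul_le_outcome_trail hμ0 hδ hcyc hℓ hℓs hFm hF (t := 1) (β := 0)
      fun x _ => transProb_nonneg hδ _ 1 x _
  have hu := tendsto_one_of_monotone_of_sub_le hmono (fun k => outcome_le_one hμ0 hδ hα _ _) hβ T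
    fun k => by linarith [add_mul_le_outcome_trail hμ0 hδ hcyc hℓ hℓs hFm hF (hβle k)]
  refine ⟨markovStrat F, hα, Tendsto.liminf_eq ?_⟩
  refine tendsto_of_tendsto_of_tendsto_of_le_of_le' (hu.comp (tendsto_sub_atTop_nat m))
    tendsto_const_nhds ?_ (Eventually.of_forall fun n => dnorm_le (outcome_le_one hμ0 hδ hα n))
  filter_upwards [eventually_ge_atTop m] with n hn
  have := le_dnorm (outcome μ0 δ (markovStrat F) n) (ℓ (phase hd (n - m)))
  simpa only [u, Function.comp, Nat.add_sub_cancel' hn] using this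

end Sufficiency

lemma exists_add_lt_apply_eq {β : Type*} [Finite β] (v : ℕ → β) (N : ℕ) (B : ℕ → ℕ) :
    ∃ m₁ m₂, N ≤ m₁ ∧ m₁ + B m₁ < m₂ ∧ v m₂ = v m₁ := by
  obtain ⟨b, hb⟩ := Finite.exists_infinite_fiber v
  have hinf := Set.infinite_coe_iff.mp hb
  obtain ⟨m₁, hm₁, hNm₁⟩ := hinf.exists_gt N
  obtain ⟨m₂, hm₂, hlt⟩ := hinf.exists_gt (m₁ + B m₁)
  exact ⟨m₁, m₂, hNm₁.le, hlt, hm₂.trans hm₁.symm⟩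

section Necessity

variable {μ0 : L → ℝ} {δ : L → A → L → ℝ} {α : Hist L A → A → ℝ}

lemma exists_trail_of_stronglySync (hμ0 : IsDist μ0) (hδ : IsTrans δ) (hα : IsStrategy α)
    (hsync : StronglySync μ0 δ α) :
    ∃ ℓ : ℕ → L, Tendsto (fun n => outcome μ0 δ α n (ℓ n)) atTop (𝓝 1) := by
  have := nonempty_of_isDist hμ0
  choose ℓ hℓ using fun n => exists_dnorm_eq (outcome μ0 δ α n)
  refine ⟨ℓ, ?_⟩
  simp only [← hℓ]
  have hle : ∀ n, dnorm (outcome μ0 δ α n) ≤ 1 := fun n => dnorm_le (outcome_le_one hμ0 hδ hα n)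
  refine tendsto_order.2 ⟨fun b hb => eventually_lt_of_lt_liminf (hsync ▸ hb) ?_,
    fun b hb => Eventually.of_forall fun n => (hle n).trans_lt hb⟩
  exact isBoundedUnder_of ⟨0, fun n => (outcome_nonneg hμ0 hδ hα n (ℓ n)).trans (le_dnorm _ _)⟩

omit [Fintype L] [DecidableEq L] [DecidableEq A] in
lemma IsStrategy.nonempty [Nonempty L] (hα : IsStrategy α) : Nonempty A :=
  nonempty_of_isDist (hα ⟨Classical.arbitrary L, []⟩)

-- Some action carries at least `1 / (2 |A|)` of the mass at `x`, hence sends at least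
-- `p / (2 |A|)` to each of its successors.
lemma exists_post_eq_singleton_of_concentrated (hμ0 : IsDist μ0) (hδ : IsTrans δ)
    (hα : IsStrategy α) {p : ℝ} (hp0 : 0 < p) (hp : ∀ l a l', 0 < δ l a l' → p ≤ δ l a l')
    {n : ℕ} {x z : L} (hx : 1 / 2 ≤ outcome μ0 δ α n x)
    (hz : ∀ y, y ≠ z → outcome μ0 δ α (n + 1) y < p / (2 * Fintype.card A)) :
    ∃ a, 0 < pairProb μ0 δ α n x a ∧ post δ x a = {z} := by
  have : Nonempty L := ⟨x⟩
  have := hα.nonempty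
  have hc : (0 : ℝ) < Fintype.card A := Nat.cast_pos.mpr Fintype.card_pos
  obtain ⟨a, -, ha⟩ := Finset.exists_le_of_sum_le
    (f := fun _ => outcome μ0 δ α n x / Fintype.card A)
    Finset.univ_nonempty (by rw [sum_pairProb hα, Finset.sum_const, Finset.card_univ,
      nsmul_eq_mul, mul_div_cancel₀ _ hc.ne'])
  have hw : 1 / (2 * Fintype.card A) ≤ pairProb μ0 δ α n x a := by
    refine le_trans ?_ ha
    rw [← div_div]
    exact div_le_div_of_nonneg_right hx hc.le
  have hmem : ∀ y ∈ post δ x a, y = z := by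
    intro y hy
    by_contra hyz
    have hmass : 1 / (2 * Fintype.card A) * p ≤ outcome μ0 δ α (n + 1) y :=
      (mul_le_mul hw (hp _ _ _ (mem_post.mp hy)) hp0.le (pairProb_nonneg hμ0 hδ hα n x a)).trans
        (pairProb_mul_le_outcome_succ hμ0 hδ hα n x y a)
    have := hz y hyz
    rw [one_div_mul_eq_div] at hmass
    linarith
  obtain ⟨y, hy⟩ := post_nonempty hδ x a
  exact ⟨a, (by positivity : (0 : ℝ) < 1 / (2 * Fintype.card A)).trans_le hw,
    Finset.eq_singleton_iff_unique_mem.mpr ⟨hmem y hy ▸ hy, hmem⟩⟩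

lemma eventually_exists_post_eq_singleton (hμ0 : IsDist μ0) (hδ : IsTrans δ)
    (hα : IsStrategy α) {ℓ : ℕ → L}
    (hℓ : Tendsto (fun n => outcome μ0 δ α n (ℓ n)) atTop (𝓝 1)) :
    ∀ᶠ n in atTop, ∃ a, 0 < pairProb μ0 δ α n (ℓ n) a ∧ post δ (ℓ n) a = {ℓ (n + 1)} := by
  have := nonempty_of_isDist hμ0
  have := hα.nonempty
  obtain ⟨p, hp0, hp⟩ := Finite.exists_pos_le_of_pos fun z : L × A × L => δ z.1 z.2.1 z.2.2
  set ε := min (1 / 2) (p / (2 * Fintype.card A))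
  have hε : 0 < ε := lt_min (by norm_num) (by positivity)
  have hev := hℓ.eventually_const_lt (show 1 - ε < 1 by linarith)
  filter_upwards [hev, (tendsto_add_atTop_nat 1).eventually hev] with n hn hn1
  refine exists_post_eq_singleton_of_concentrated hμ0 hδ hα hp0 (fun l a l' => hp (l, a, l'))
    (by linarith [min_le_left (1 / 2 : ℝ) (p / (2 * Fintype.card A))]) fun y hy => ?_
  have := sum_outcome_le_one_sub hμ0 hδ hα (n + 1) (S := {y}) (Finset.notMem_singleton.mpr hy.symm)
  rw [Finset.sum_singleton] at this
  linarith [min_le_right (1 / 2 : ℝ) (p / (2 * Fintype.card A))]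

variable (μ0 δ α) in
def FlowReach : ℕ → ℕ → L → L → Prop
  | _, 0, x, y => y = x
  | n, k + 1, x, y =>
    ∃ a z, 0 < pairProb μ0 δ α n x a ∧ 0 < δ x a z ∧ FlowReach (n + 1) k z y

lemma sum_outcome_le_sum_succ (hμ0 : IsDist μ0) (hδ : IsTrans δ) (hα : IsStrategy α) (n : ℕ)
    (S : Finset L) :
    ∑ x ∈ S, outcome μ0 δ α n x ≤ ∑ y ∈ Finset.univ.filter (fun y =>
      ∃ x ∈ S, ∃ a, 0 < pairProb μ0 δ α n x a ∧ 0 < δ x a y), outcome μ0 δ α (n + 1) y := by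
  set T := Finset.univ.filter fun y => ∃ x ∈ S, ∃ a, 0 < pairProb μ0 δ α n x a ∧ 0 < δ x a y
  have hterm : ∀ x ∈ S, ∀ a, pairProb μ0 δ α n x a
      = ∑ y ∈ T, pairProb μ0 δ α n x a * δ x a y := by
    intro x hx a
    rw [← Finset.mul_sum]
    rcases (pairProb_nonneg hμ0 hδ hα n x a).eq_or_lt with h | h
    · rw [← h, zero_mul]
    rw [Finset.sum_subset (Finset.subset_univ T) fun y _ hy =>
      delta_eq_zero_of_notMem_post hδ fun hy' => hy (Finset.mem_filter.mpr
        ⟨Finset.mem_univ y, x, hx, a, h, mem_post.mp hy'⟩), (hδ x a).2, mul_one]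
  calc ∑ x ∈ S, outcome μ0 δ α n x
      = ∑ y ∈ T, ∑ x ∈ S, ∑ a, pairProb μ0 δ α n x a * δ x a y := by
        rw [Finset.sum_comm]
        refine Finset.sum_congr rfl fun x hx => ?_
        rw [Finset.sum_comm, ← sum_pairProb hα]
        exact Finset.sum_congr rfl fun a _ => hterm x hx a
    _ ≤ ∑ y ∈ T, ∑ x, ∑ a, pairProb μ0 δ α n x a * δ x a y :=
        Finset.sum_le_sum fun y _ => Finset.sum_le_univ_sum_of_nonneg fun x =>
          Finset.sum_nonneg fun a _ => mul_nonneg (pairProb_nonneg hμ0 hδ hα n x a) ((hδ x a).1 y)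
    _ = _ := Finset.sum_congr rfl fun y _ => (outcome_succ_eq_sum_pairProb n y).symm

open Classical in
lemma sum_outcome_le_sum_flowReach (hμ0 : IsDist μ0) (hδ : IsTrans δ) (hα : IsStrategy α)
    (k n : ℕ) (S : Finset L) :
    ∑ x ∈ S, outcome μ0 δ α n x ≤ ∑ y ∈ Finset.univ.filter (fun y =>
      ∃ x ∈ S, FlowReach μ0 δ α n k x y), outcome μ0 δ α (n + k) y := by
  induction k generalizing n S with
  | zero => simp [FlowReach]
  | succ k ih =>
    refine (sum_outcome_le_sum_succ hμ0 hδ hα n S).trans ((ih (n + 1) _).trans_eq ?_)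
    rw [add_right_comm, add_assoc]
    refine Finset.sum_congr (Finset.filter_congr fun y _ => ?_) fun _ _ => rfl
    simp only [Finset.mem_filter, Finset.mem_univ, true_and, FlowReach]
    constructor
    · rintro ⟨z, ⟨x, hx, a, ha, hz⟩, hzy⟩
      exact ⟨x, hx, a, z, ha, hz, hzy⟩
    · rintro ⟨x, hx, a, z, ha, hz, hzy⟩
      exact ⟨z, ⟨x, hx, a, ha, hz⟩, hzy⟩

open Classical in
lemma exists_flowReach_trail (hμ0 : IsDist μ0) (hδ : IsTrans δ) (hα : IsStrategy α)
    {ℓ : ℕ → L} (hℓ : Tendsto (fun n => outcome μ0 δ α n (ℓ n)) atTop (𝓝 1)) {n : ℕ} {x : L}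
    (hx : 0 < outcome μ0 δ α n x) (K : ℕ) : ∃ k, K ≤ k ∧ FlowReach μ0 δ α n k x (ℓ (n + k)) := by
  by_contra! hnot
  obtain ⟨M, hM⟩ := eventually_atTop.mp
    (hℓ.eventually_const_lt (show 1 - outcome μ0 δ α n x < 1 by linarith))
  have hflow := sum_outcome_le_sum_flowReach hμ0 hδ hα (K + M) n {x}
  have hout := sum_outcome_le_one_sub hμ0 hδ hα (n + (K + M)) (z := ℓ (n + (K + M)))
    (S := Finset.univ.filter fun y => ∃ x' ∈ ({x} : Finset L), FlowReach μ0 δ α n (K + M) x' y)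
    (by simpa using hnot (K + M) (Nat.le_add_right K M))
  rw [Finset.sum_singleton] at hflow
  linarith [hM (n + (K + M)) (by omega)]

variable (μ0 δ α) in
/-- Since `sInf ∅ = 0`, this is meaningful only where the trail is reached, e.g. from states of
positive mass (`trailHit_spec`). -/
noncomputable def trailHit (ℓ : ℕ → L) (N n : ℕ) (x : L) : ℕ :=
  sInf {k | N ≤ n + k ∧ FlowReach μ0 δ α n k x (ℓ (n + k))}

section TrailHit

variable {ℓ : ℕ → L} {N : ℕ}

lemma trailHit_spec (hμ0 : IsDist μ0) (hδ : IsTrans δ) (hα : IsStrategy α)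
    (hℓ : Tendsto (fun n => outcome μ0 δ α n (ℓ n)) atTop (𝓝 1)) {n : ℕ} {x : L}
    (hx : 0 < outcome μ0 δ α n x) :
    N ≤ n + trailHit μ0 δ α ℓ N n x ∧
      FlowReach μ0 δ α n (trailHit μ0 δ α ℓ N n x) x (ℓ (n + trailHit μ0 δ α ℓ N n x)) := by
  obtain ⟨k, hk, hreach⟩ := exists_flowReach_trail hμ0 hδ hα hℓ hx N
  exact Nat.sInf_mem (s := {k | N ≤ n + k ∧ FlowReach μ0 δ α n k x (ℓ (n + k))})
    ⟨k, by omega, hreach⟩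

lemma trailHit_self {n : ℕ} (hn : N ≤ n) : trailHit μ0 δ α ℓ N n (ℓ n) = 0 :=
  Nat.sInf_eq_zero.mpr (Or.inl ⟨hn, rfl⟩)

lemma eq_trail_of_trailHit_eq_zero (hμ0 : IsDist μ0) (hδ : IsTrans δ) (hα : IsStrategy α)
    (hℓ : Tendsto (fun n => outcome μ0 δ α n (ℓ n)) atTop (𝓝 1)) {n : ℕ} {x : L}
    (hx : 0 < outcome μ0 δ α n x) (h : trailHit μ0 δ α ℓ N n x = 0) : N ≤ n ∧ x = ℓ n := by
  have := trailHit_spec (N := N) hμ0 hδ hα hℓ hx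
  rw [h, add_zero] at this
  exact ⟨this.1, this.2.symm⟩

lemma exists_trailHit_lt (hμ0 : IsDist μ0) (hδ : IsTrans δ) (hα : IsStrategy α)
    (hℓ : Tendsto (fun n => outcome μ0 δ α n (ℓ n)) atTop (𝓝 1)) {n : ℕ} {x : L}
    (hx : 0 < outcome μ0 δ α n x) (h : trailHit μ0 δ α ℓ N n x ≠ 0) :
    ∃ a, 0 < pairProb μ0 δ α n x a ∧
      ∃ y, 0 < δ x a y ∧ trailHit μ0 δ α ℓ N (n + 1) y < trailHit μ0 δ α ℓ N n x := by
  obtain ⟨hN, hreach⟩ := trailHit_spec (N := N) hμ0 hδ hα hℓ hx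
  obtain ⟨k, hk⟩ := Nat.exists_eq_add_one_of_ne_zero h
  rw [hk] at hN hreach ⊢
  obtain ⟨a, y, ha, hy, hyreach⟩ := hreach
  refine ⟨a, ha, y, hy, Nat.lt_succ_of_le (Nat.sInf_le ⟨by omega, ?_⟩)⟩
  rwa [← add_assoc, add_right_comm] at hyreach

variable (μ0 δ α) in
structure IsTrailSelection (ℓ : ℕ → L) (N : ℕ) (f : ℕ → L → A) : Prop where
  pairProb_pos : ∀ n x, 0 < outcome μ0 δ α n x → 0 < pairProb μ0 δ α n x (f n x)
  post_trail : ∀ n, N ≤ n → post δ (ℓ n) (f n (ℓ n)) = {ℓ (n + 1)}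
  exists_trailHit_lt : ∀ n x, 0 < outcome μ0 δ α n x → trailHit μ0 δ α ℓ N n x ≠ 0 →
    ∃ y ∈ post δ x (f n x), trailHit μ0 δ α ℓ N (n + 1) y < trailHit μ0 δ α ℓ N n x

lemma exists_isTrailSelection (hμ0 : IsDist μ0) (hδ : IsTrans δ) (hα : IsStrategy α)
    (hℓ : Tendsto (fun n => outcome μ0 δ α n (ℓ n)) atTop (𝓝 1))
    (hN : ∀ n, N ≤ n → ∃ a, 0 < pairProb μ0 δ α n (ℓ n) a ∧ post δ (ℓ n) a = {ℓ (n + 1)}) :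
    ∃ f, IsTrailSelection μ0 δ α ℓ N f := by
  have := nonempty_of_isDist hμ0
  have := hα.nonempty
  have hsel : ∀ n x, ∃ a, (0 < outcome μ0 δ α n x → 0 < pairProb μ0 δ α n x a) ∧
      (N ≤ n → x = ℓ n → post δ x a = {ℓ (n + 1)}) ∧
      (0 < outcome μ0 δ α n x → trailHit μ0 δ α ℓ N n x ≠ 0 →
        ∃ y ∈ post δ x a, trailHit μ0 δ α ℓ N (n + 1) y < trailHit μ0 δ α ℓ N n x) := by
    intro n x
    by_cases htrail : N ≤ n ∧ x = ℓ n
    · obtain ⟨hn, rfl⟩ := htrail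
      obtain ⟨a, ha, hpost⟩ := hN n hn
      exact ⟨a, fun _ => ha, fun _ _ => hpost, fun _ h => absurd (trailHit_self hn) h⟩
    by_cases hx : 0 < outcome μ0 δ α n x
    · obtain ⟨a, ha, y, hy, hlt⟩ := exists_trailHit_lt hμ0 hδ hα hℓ hx
        fun h => htrail (eq_trail_of_trailHit_eq_zero hμ0 hδ hα hℓ hx h)
      exact ⟨a, fun _ => ha, fun hn hxl => absurd ⟨hn, hxl⟩ htrail,
        fun _ _ => ⟨y, mem_post.mpr hy, hlt⟩⟩
    · exact ⟨Classical.arbitrary A, fun h => absurd h hx, fun hn hxl => absurd ⟨hn, hxl⟩ htrail,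
        fun h => absurd h hx⟩
  choose f hf₁ hf₂ hf₃ using hsel
  exact ⟨f, ⟨hf₁, fun n hn => hf₂ n (ℓ n) hn rfl, hf₃⟩⟩

lemma IsTrailSelection.exists_trail_mem (hμ0 : IsDist μ0) (hδ : IsTrans δ) (hα : IsStrategy α)
    (hℓ : Tendsto (fun n => outcome μ0 δ α n (ℓ n)) atTop (𝓝 1)) {f : ℕ → L → A}
    (hf : IsTrailSelection μ0 δ α ℓ N f) {C : ℕ → Finset L} {n B : ℕ}
    (hC : ∀ k < B, ∀ y ∈ C k, post δ y (f (n + k) y) ⊆ C (k + 1)) {x : L} (hxC : x ∈ C 0)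
    (hx : 0 < outcome μ0 δ α n x) (hB : trailHit μ0 δ α ℓ N n x ≤ B) :
    ∃ k ≤ B, N ≤ n + k ∧ ℓ (n + k) ∈ C k := by
  induction B generalizing n x C with
  | zero =>
    obtain ⟨hn, rfl⟩ := eq_trail_of_trailHit_eq_zero hμ0 hδ hα hℓ hx (Nat.le_zero.mp hB)
    exact ⟨0, le_rfl, hn, hxC⟩
  | succ B ih =>
    by_cases h0 : trailHit μ0 δ α ℓ N n x = 0
    · obtain ⟨hn, rfl⟩ := eq_trail_of_trailHit_eq_zero hμ0 hδ hα hℓ hx h0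
      exact ⟨0, (B + 1).zero_le, hn, hxC⟩
    obtain ⟨y, hy, hlt⟩ := hf.exists_trailHit_lt n x hx h0
    have hyC : y ∈ C 1 := hC 0 B.succ_pos x hxC hy
    have hyX := outcome_succ_pos hμ0 hδ hα (hf.pairProb_pos n x hx) (mem_post.mp hy)
    have hC' : ∀ k < B, ∀ z ∈ C (k + 1), post δ z (f (n + 1 + k) z) ⊆ C (k + 1 + 1) := by
      intro k hk z hz
      rw [add_right_comm, add_assoc]
      exact hC (k + 1) (by omega) z hz
    obtain ⟨k, hk, hN, hmem⟩ := ih (C := fun k => C (k + 1)) hC' hyC hyX (by omega)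
    rw [add_right_comm, add_assoc] at hmem
    exact ⟨k + 1, by omega, by omega, hmem⟩

end TrailHit

section TrailSelection

variable {ℓ : ℕ → L} {N : ℕ} {f : ℕ → L → A}

lemma IsTrailSelection.outcome_pos (hμ0 : IsDist μ0) (hδ : IsTrans δ) (hα : IsStrategy α)
    (hf : IsTrailSelection μ0 δ α ℓ N f) {n : ℕ} {x : L} (hx : x ∈ cellRun μ0 δ f n) :
    0 < outcome μ0 δ α n x := by
  induction n generalizing x with
  | zero => simpa [outcome_zero, cellRun, initCell] using hx
  | succ n ih =>
    obtain ⟨y, hy, hxy⟩ := mem_deltaP.mp hx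
    exact outcome_succ_pos hμ0 hδ hα (hf.pairProb_pos n y (ih hy)) (mem_post.mp hxy)

lemma IsTrailSelection.eventually_trail_mem_cellRun (hμ0 : IsDist μ0) (hδ : IsTrans δ)
    (hα : IsStrategy α) (hℓ : Tendsto (fun n => outcome μ0 δ α n (ℓ n)) atTop (𝓝 1))
    (hf : IsTrailSelection μ0 δ α ℓ N f) :
    ∃ N₁, N ≤ N₁ ∧ ∀ n, N₁ ≤ n → ℓ n ∈ cellRun μ0 δ f n := by
  obtain ⟨x, -, hx⟩ := Finset.exists_lt_of_sum_lt
    (show ∑ _x : L, (0 : ℝ) < ∑ x, μ0 x by simp [hμ0.2])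
  have hxC : x ∈ cellRun μ0 δ f 0 := by simp [cellRun, initCell, hx]
  obtain ⟨N₁, -, hN₁, hmem⟩ := hf.exists_trail_mem hμ0 hδ hα hℓ (n := 0)
    (fun k _ y hy z hz => mem_deltaP.mpr ⟨y, hy, by rwa [zero_add] at hz⟩) hxC
    (hf.outcome_pos hμ0 hδ hα hxC) le_rfl
  rw [zero_add] at hN₁ hmem
  refine ⟨N₁, hN₁, fun n hn => ?_⟩
  induction n, hn using Nat.le_induction with
  | base => exact hmem
  | succ n hn ih =>
    refine mem_deltaP.mpr ⟨ℓ n, ih, ?_⟩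
    rw [hf.post_trail n (hN₁.trans hn)]
    exact Finset.mem_singleton_self _

lemma IsTrailSelection.exists_trail_mem_of_isRCSP (hμ0 : IsDist μ0) (hδ : IsTrans δ)
    (hα : IsStrategy α) (hℓ : Tendsto (fun n => outcome μ0 δ α n (ℓ n)) atTop (𝓝 1))
    (hf : IsTrailSelection μ0 δ α ℓ N f) {m d : ℕ} (hd : 0 < d) {s g : Fin d → Finset L}
    (hg : IsRCSP hd δ s (fun j => f (m + j)) g)
    (hs : ∀ x ∈ s ⟨0, hd⟩, 0 < outcome μ0 δ α m x ∧ trailHit μ0 δ α ℓ N m x ≤ d) :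
    ∃ k ≤ d, ℓ (m + k) ∈ g (phase hd k) := by
  obtain ⟨x, hx⟩ := (hg ⟨0, hd⟩).1
  have hx0 : x ∈ g (phase hd 0) := by rwa [show phase hd 0 = ⟨0, hd⟩ from phase_val hd ⟨0, hd⟩]
  have hC : ∀ k < d, ∀ y ∈ g (phase hd k), post δ y (f (m + k) y) ⊆ g (phase hd (k + 1)) := by
    intro k hk y hy z hz
    rw [phase_succ, ← (hg _).2.2]
    refine Finset.mem_biUnion.mpr ⟨y, hy, ?_⟩
    show z ∈ post δ y (f (m + phase hd k) y)
    rwa [val_phase_of_lt hd hk]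
  obtain ⟨k, hk, -, hmem⟩ := hf.exists_trail_mem hμ0 hδ hα hℓ hC hx0
    (hs x ((hg _).2.1 hx)).1 (hs x ((hg _).2.1 hx)).2
  exact ⟨k, hk, hmem⟩

end TrailSelection

theorem exists_cycle_of_trail (hμ0 : IsDist μ0) (hδ : IsTrans δ) (hα : IsStrategy α)
    {ℓ : ℕ → L} (hℓ : Tendsto (fun n => outcome μ0 δ α n (ℓ n)) atTop (𝓝 1)) :
    ∃ (d : ℕ) (hd : 0 < d) (s : Fin d → Finset L) (act : Fin d → L → A),
      (∀ i, (s i).Nonempty) ∧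
      (∀ i, deltaP δ (s i) (act i) = s (cyc hd i)) ∧
      ReachP μ0 δ (s ⟨0, hd⟩) ∧
      ∃ g : Fin d → Finset L,
        IsMinRCSP hd δ s act g ∧
        (∀ g', IsMinRCSP hd δ s act g' → g' = g) ∧
        (∀ i, (g i).card = 1) := by
  obtain ⟨N, hN⟩ := eventually_atTop.mp (eventually_exists_post_eq_singleton hμ0 hδ hα hℓ)
  obtain ⟨f, hf⟩ := exists_isTrailSelection hμ0 hδ hα hℓ hN
  obtain ⟨N₁, hNN₁, htrail⟩ := hf.eventually_trail_mem_cellRun hμ0 hδ hα hℓ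
  -- The gap exceeds every hitting time from the cell at `m`, so that the descent towards the
  -- trail in `exists_trail_mem_of_isRCSP` stays within one period of the cycle.
  obtain ⟨m, m', hm, hmm', hrec⟩ := exists_add_lt_apply_eq (fun n => (cellRun μ0 δ f n, ℓ n)) N₁
    fun m => (cellRun μ0 δ f m).sup (trailHit μ0 δ α ℓ N m)
  obtain ⟨hcell, hℓm⟩ := Prod.mk.inj hrec
  set d := m' - m
  have hd : 0 < d := by omega
  have hm' : m' = m + d := by omega
  rw [hm'] at hcell hℓm
  have hg : IsRCSP hd δ (fun j => cellRun μ0 δ f (m + j)) (fun j => f (m + j))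
      (fun j => {ℓ (m + j)}) := by
    intro j
    refine ⟨Finset.singleton_nonempty _, Finset.singleton_subset_iff.mpr (htrail _ (by omega)), ?_⟩
    show ({ℓ (m + j)} : Finset L).biUnion (fun l => post δ l (f (m + j) l))
      = {ℓ (m + cyc hd j)}
    rw [Finset.singleton_biUnion, hf.post_trail _ (by omega), cyc_eq_phase,
      apply_phase_of_periodic hd hℓm (show (j : ℕ) + 1 ≤ d from j.isLt), add_assoc]
  refine ⟨d, hd, _, _, fun j => ⟨_, htrail _ (by omega)⟩, fun j => ?_, reachP_cellRun f _, _,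
    isMinRCSP_of_card_eq_one hg fun _ => Finset.card_singleton _, fun g' hg' => ?_,
    fun _ => Finset.card_singleton _⟩
  · show deltaP δ (cellRun μ0 δ f (m + j)) (f (m + j)) = cellRun μ0 δ f (m + cyc hd j)
    rw [cyc_eq_phase, apply_phase_of_periodic hd hcell (show (j : ℕ) + 1 ≤ d from j.isLt),
      ← add_assoc]
    rfl
  · obtain ⟨k, hk, hmem⟩ := hf.exists_trail_mem_of_isRCSP hμ0 hδ hα hℓ hd hg'.1 fun x hx =>
      ⟨hf.outcome_pos hμ0 hδ hα hx, (Finset.le_sup (f := trailHit μ0 δ α ℓ N m)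
        (show x ∈ cellRun μ0 δ f m from hx)).trans (by omega)⟩
    refine (hg'.2 _ hg (hg.subset_of_subset hg'.1.isClosedP (i := phase hd k) ?_)).symm
    rwa [Finset.singleton_subset_iff, apply_phase_of_periodic hd hℓm hk]

end Necessity

/-- An MDP has a (perfect-information) strongly synchronizing strategy
iff its perfect-information subset construction has an accessible cycle with exactly one
minimal recurrent cyclic set, all of whose elements are singletons. -/
theorem strongly_sync_iff_perfect
    (μ0 : L → ℝ) (δ : L → A → L → ℝ)
    (hμ0 : IsDist μ0) (hδ : IsTrans δ) :
    (∃ α : Hist L A → A → ℝ, IsStrategy α ∧ StronglySync μ0 δ α) ↔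
    (∃ (d : ℕ) (hd : 0 < d) (s : Fin d → Finset L) (act : Fin d → L → A),
      (∀ i, (s i).Nonempty) ∧
      (∀ i, deltaP δ (s i) (act i) = s (cyc hd i)) ∧
      ReachP μ0 δ (s ⟨0, hd⟩) ∧
      ∃ g : Fin d → Finset L,
        IsMinRCSP hd δ s act g ∧
        (∀ g', IsMinRCSP hd δ s act g' → g' = g) ∧
        (∀ i, (g i).card = 1)) := by
  constructor
  · rintro ⟨α, hα, hsync⟩
    obtain ⟨ℓ, hℓ⟩ := exists_trail_of_stronglySync hμ0 hδ hα hsync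
    exact exists_cycle_of_trail hμ0 hδ hα hℓ
  · rintro ⟨d, hd, s, act, -, hcyc, hreach, g, hg, huniq, hcard⟩
    choose ℓ hℓ using fun i => Finset.card_eq_one.mp (hcard i)
    have hpost : ∀ i, post δ (ℓ i) (act i (ℓ i)) = {ℓ (cyc hd i)} := fun i => by
      simpa only [hℓ, Finset.singleton_biUnion] using (hg.1 i).2.2
    exact exists_stronglySync_of_trail hμ0 hδ hcyc hreach hpost
      (fun i => (hg.1 i).2.1 (by simp [hℓ])) fun g' hg' i => by simp [huniq g' hg', hℓ]

end SyncMDP
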